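/- arXiv:1510.09111 — 5 statements merged into one kernel-verified Lean document; each statement's English description precedes it below -/
import Mathlib

section
/- Let A be a commutative ℂ-algebra with an antisymmetric biderivation bracket {·,·}, and let B = A ⊕ Aε with product (f + εf')·(g + εg') = fg + ε(fg' + f'g + ½{f,g}). Let P' ⊆ B be a two-sided ideal and set P = {f ∈ A : ∃ f' ∈ A, f + εf' ∈ P'}. Assume that whenever εh ∈ P' one has h ∈ P. Then P is a Lagrangian ideal of A, i.e. {f,g} ∈ P for all f,g ∈ P. -/
/-- The product on `B = A ⊕ Aε`: `(f + εf')·(g + εg') = fg + ε(fg' + f'g + ½{f,g})`,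
encoded on pairs `(f, f')`. -/
noncomputable def derivedMul {A : Type*} [CommRing A] [Algebra ℂ A] (br : A → A → A)
    (p q : A × A) : A × A :=
  (p.1 * q.1, p.1 * q.2 + p.2 * q.1 + (1 / 2 : ℂ) • br p.1 q.1)

/-- The image `P ⊆ A` of an ideal `P' ⊆ B = A ⊕ Aε` under reduction mod `ε`:
`P = {f : ∃ f', f + εf' ∈ P'}`. -/
def idealImage {A : Type*} (P' : Set (A × A)) : Set A := {f : A | ∃ f' : A, (f, f') ∈ P'}

theorem derivedMul_sub_derivedMul_swap {A : Type*} [CommRing A] [Algebra ℂ A] (br : A → A → A)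
    (hanti : ∀ f g : A, br f g = - br g f) (p q : A × A) :
    derivedMul br p q - derivedMul br q p = (0, br p.1 q.1) := by
  have half_add_half : (1 / 2 : ℂ) • br p.1 q.1 + (1 / 2 : ℂ) • br p.1 q.1 = br p.1 q.1 := by
    rw [← add_smul]; norm_num
  simp only [derivedMul, Prod.mk_sub_mk, Prod.mk.injEq, hanti q.1 p.1, smul_neg]
  constructor
  · ring
  · linear_combination half_add_half

theorem regular_ideal_isLagrangian_general {A : Type*} [CommRing A] [Algebra ℂ A]
    (br : A → A → A)
    (hanti : ∀ f g : A, br f g = - br g f)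
    (P' : Set (A × A))
    (hP'add : ∀ p ∈ P', ∀ q ∈ P', p + q ∈ P')
    (hP'neg : ∀ p ∈ P', -p ∈ P')
    (hP'mul_left : ∀ b : A × A, ∀ p ∈ P', derivedMul br b p ∈ P')
    (hreg : ∀ h : A, ((0 : A), h) ∈ P' → h ∈ idealImage P') :
    ∀ f g : A, f ∈ idealImage P' → g ∈ idealImage P' → br f g ∈ idealImage P' := by
  rintro f g ⟨f', hf⟩ ⟨g', hg⟩
  have commutator_mem : ((0 : A), br f g) ∈ P' := by
    rw [← derivedMul_sub_derivedMul_swap br hanti (f, f') (g, g'), sub_eq_add_neg]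
    exact hP'add _ (hP'mul_left _ _ hg) _ (hP'neg _ (hP'mul_left _ _ hf))
  exact hreg _ commutator_mem

/-- If `P'` is a two-sided ideal of `B = A ⊕ Aε` (for the product
`(f + εf')·(g + εg') = fg + ε(fg' + f'g + ½{f,g})`, where `{·,·}` is a bilinear antisymmetric
biderivation) whose image mod `ε` is `P`, and if `εh ∈ P'` implies `h ∈ P` (regularity),
then `P` is a Lagrangian ideal: `{f,g} ∈ P` for all `f, g ∈ P`. -/
theorem regular_ideal_isLagrangian {A : Type*} [CommRing A] [Algebra ℂ A]
    (br : A → A → A)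
    (hadd_left : ∀ f g h : A, br (f + g) h = br f h + br g h)
    (hadd_right : ∀ f g h : A, br f (g + h) = br f g + br f h)
    (hsmul_left : ∀ (c : ℂ) (f g : A), br (c • f) g = c • br f g)
    (hsmul_right : ∀ (c : ℂ) (f g : A), br f (c • g) = c • br f g)
    (hanti : ∀ f g : A, br f g = - br g f)
    (hleibniz_left : ∀ f g h : A, br (f * g) h = f * br g h + br f h * g)
    (hleibniz_right : ∀ f g h : A, br f (g * h) = br f g * h + g * br f h)
    (P' : Set (A × A))
    (hP'zero : (0 : A × A) ∈ P')
    (hP'add : ∀ p ∈ P', ∀ q ∈ P', p + q ∈ P')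
    (hP'neg : ∀ p ∈ P', -p ∈ P')
    (hP'mul_left : ∀ b : A × A, ∀ p ∈ P', derivedMul br b p ∈ P')
    (hP'mul_right : ∀ b : A × A, ∀ p ∈ P', derivedMul br p b ∈ P')
    (hreg : ∀ h : A, ((0 : A), h) ∈ P' → h ∈ idealImage P') :
    ∀ f g : A, f ∈ idealImage P' → g ∈ idealImage P' → br f g ∈ idealImage P' :=
  regular_ideal_isLagrangian_general br hanti P' hP'add hP'neg hP'mul_left hreg
end

section
/- Let A be a commutative ℂ-algebra with an antisymmetric biderivation bracket {·,·}, and let B = A ⊕ Aε with product (f + εf')·(g + εg') = fg + ε(fg' + f'g + ½{f,g}). Let P' ⊆ B be a two-sided ideal, P = {f ∈ A : ∃ f', f + εf' ∈ P'}, and assume εh ∈ P' implies h ∈ P. Then the map Υ : P → A/P defined by Υ(f) = f' mod P for any f' with f + εf' ∈ P' is well-defined (independent of the choice of f'), and for every f ∈ P and g ∈ A one has Υ(gf) = gΥ(f) + ½{g,f} in A/P. -/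
/-! Two lifts `f + εf₁`, `f + εf₂` of the same `f ∈ P` differ by `ε(f₁ - f₂) ∈ P'`, so
regularity puts `f₁ - f₂` in `P`. For the Leibniz rule, `g · (f + εf') = gf + ε(gf' + ½{g,f})`
is a lift of `gf` lying in `P'`, so by well-definedness it represents the same class as any
other lift `gf + εh`. -/

theorem derivedMul_mk_zero_left {A : Type*} [CommRing A] [Algebra ℂ A] (br : A → A → A)
    (g f f' : A) :
    derivedMul br (g, 0) (f, f') = (g * f, g * f' + (1 / 2 : ℂ) • br g f) := by
  simp [derivedMul]

section

variable {A : Type*} [AddCommGroup A] {P' : Set (A × A)}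
  (hadd : ∀ p ∈ P', ∀ q ∈ P', p + q ∈ P') (hneg : ∀ p ∈ P', -p ∈ P')

include hadd hneg in
theorem mk_zero_sub_mem {f a b : A} (ha : (f, a) ∈ P') (hb : (f, b) ∈ P') :
    ((0 : A), a - b) ∈ P' := by
  simpa [sub_eq_add_neg] using hadd _ ha _ (hneg _ hb)

include hadd hneg in
theorem sub_mem_idealImage_of_mk_mem (hreg : ∀ h : A, ((0 : A), h) ∈ P' → h ∈ idealImage P')
    {f a b : A} (ha : (f, a) ∈ P') (hb : (f, b) ∈ P') : a - b ∈ idealImage P' :=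
  hreg _ (mk_zero_sub_mem hadd hneg ha hb)

end

theorem upsilon_wellDefined_and_leibniz_general {A : Type*} [CommRing A] [Algebra ℂ A]
    (br : A → A → A)
    (P' : Set (A × A))
    (hP'add : ∀ p ∈ P', ∀ q ∈ P', p + q ∈ P')
    (hP'neg : ∀ p ∈ P', -p ∈ P')
    (hP'mul_left : ∀ b : A × A, ∀ p ∈ P', derivedMul br b p ∈ P')
    (hreg : ∀ h : A, ((0 : A), h) ∈ P' → h ∈ idealImage P') :
    (∀ f f₁ f₂ : A, (f, f₁) ∈ P' → (f, f₂) ∈ P' → f₁ - f₂ ∈ idealImage P') ∧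
    (∀ f f' g h : A, (f, f') ∈ P' → (g * f, h) ∈ P' →
      h - (g * f' + (1 / 2 : ℂ) • br g f) ∈ idealImage P') := by
  refine ⟨fun _ _ _ => sub_mem_idealImage_of_mk_mem hP'add hP'neg hreg,
    fun f f' g h hf hgf => sub_mem_idealImage_of_mk_mem hP'add hP'neg hreg hgf ?_⟩
  simpa only [derivedMul_mk_zero_left] using hP'mul_left (g, 0) _ hf

/-- Let `P'` be a two-sided ideal of `B = A ⊕ Aε` (for the product
`(f + εf')·(g + εg') = fg + ε(fg' + f'g + ½{f,g})`, where `{·,·}` is a bilinear antisymmetric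
biderivation), with image `P` mod `ε`, satisfying the regularity hypothesis that `εh ∈ P'`
implies `h ∈ P`.  Then the map `Υ : P → A/P`, `Υ(f) = f' mod P` whenever `f + εf' ∈ P'`, is
well defined (any two choices of `f'` agree mod `P`), and it satisfies
`Υ(gf) = gΥ(f) + ½{g,f}` in `A/P`: any representative `h` of `Υ(gf)` is congruent mod `P`
to `g·f' + ½{g,f}`. -/
theorem upsilon_wellDefined_and_leibniz {A : Type*} [CommRing A] [Algebra ℂ A]
    (br : A → A → A)
    (hadd_left : ∀ f g h : A, br (f + g) h = br f h + br g h)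
    (hadd_right : ∀ f g h : A, br f (g + h) = br f g + br f h)
    (hsmul_left : ∀ (c : ℂ) (f g : A), br (c • f) g = c • br f g)
    (hsmul_right : ∀ (c : ℂ) (f g : A), br f (c • g) = c • br f g)
    (hanti : ∀ f g : A, br f g = - br g f)
    (hleibniz_left : ∀ f g h : A, br (f * g) h = f * br g h + br f h * g)
    (hleibniz_right : ∀ f g h : A, br f (g * h) = br f g * h + g * br f h)
    (P' : Set (A × A))
    (hP'zero : (0 : A × A) ∈ P')
    (hP'add : ∀ p ∈ P', ∀ q ∈ P', p + q ∈ P')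
    (hP'neg : ∀ p ∈ P', -p ∈ P')
    (hP'mul_left : ∀ b : A × A, ∀ p ∈ P', derivedMul br b p ∈ P')
    (hP'mul_right : ∀ b : A × A, ∀ p ∈ P', derivedMul br p b ∈ P')
    (hreg : ∀ h : A, ((0 : A), h) ∈ P' → h ∈ idealImage P') :
    (∀ f f₁ f₂ : A, (f, f₁) ∈ P' → (f, f₂) ∈ P' → f₁ - f₂ ∈ idealImage P') ∧
    (∀ f f' g h : A, (f, f') ∈ P' → (g * f, h) ∈ P' →
      h - (g * f' + (1 / 2 : ℂ) • br g f) ∈ idealImage P') :=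
  upsilon_wellDefined_and_leibniz_general br P' hP'add hP'neg hP'mul_left hreg
end

section
/- Let A₁, A₂, B₁, B₂ ∈ SL₂(ℂ) and let ξ, η ∈ sl₂(ℂ) be traceless 2×2 complex matrices. Then tr(B₂ η B₁ A₂ ξ A₁) − tr(B₁⁻¹ η B₂⁻¹ A₂ ξ A₁) = tr(A₂ ξ A₁) · tr(B₂ η B₁). -/
/-!
For a `2 × 2` matrix `M` one has `M + adj M = tr M • 1`, the adjugate is an anti-automorphism,
it inverts elements of `SL₂`, and it negates traceless matrices. Hence
`B₁⁻¹ η B₂⁻¹ = -(adj B₁ · adj η · adj B₂) = -adj (B₂ η B₁)`, so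
`B₂ η B₁ - B₁⁻¹ η B₂⁻¹ = tr (B₂ η B₁) • 1`; multiplying by `A₂ ξ A₁` and taking traces gives the
identity.
-/

open Matrix

namespace Matrix

variable {R : Type*} [CommRing R]

theorem add_adjugate_fin_two (M : Matrix (Fin 2) (Fin 2) R) : M + adjugate M = M.trace • 1 := by
  rw [adjugate_fin_two, trace_fin_two]
  ext i j
  fin_cases i <;> fin_cases j <;> simp [add_comm]

theorem adjugate_fin_two_of_trace_eq_zero {η : Matrix (Fin 2) (Fin 2) R} (hη : η.trace = 0) :
    adjugate η = -η := by
  have h := add_adjugate_fin_two η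
  rw [hη, zero_smul] at h
  exact eq_neg_of_add_eq_zero_right h

namespace SpecialLinearGroup

theorem coe_inv_mul_mul_coe_inv_fin_two (B₁ B₂ : SpecialLinearGroup (Fin 2) R)
    {η : Matrix (Fin 2) (Fin 2) R} (hη : η.trace = 0) :
    ((B₁⁻¹ : SpecialLinearGroup (Fin 2) R) : Matrix (Fin 2) (Fin 2) R) * η *
        ((B₂⁻¹ : SpecialLinearGroup (Fin 2) R) : Matrix (Fin 2) (Fin 2) R) =
      -adjugate ((B₂ : Matrix (Fin 2) (Fin 2) R) * η * (B₁ : Matrix (Fin 2) (Fin 2) R)) := by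
  rw [coe_inv, coe_inv, adjugate_mul_distrib, adjugate_mul_distrib,
    adjugate_fin_two_of_trace_eq_zero hη]
  noncomm_ring

theorem coe_mul_mul_coe_sub_coe_inv_mul_mul_coe_inv_fin_two (B₁ B₂ : SpecialLinearGroup (Fin 2) R)
    {η : Matrix (Fin 2) (Fin 2) R} (hη : η.trace = 0) :
    (B₂ : Matrix (Fin 2) (Fin 2) R) * η * (B₁ : Matrix (Fin 2) (Fin 2) R) -
        ((B₁⁻¹ : SpecialLinearGroup (Fin 2) R) : Matrix (Fin 2) (Fin 2) R) * η *
          ((B₂⁻¹ : SpecialLinearGroup (Fin 2) R) : Matrix (Fin 2) (Fin 2) R) =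
      ((B₂ : Matrix (Fin 2) (Fin 2) R) * η * (B₁ : Matrix (Fin 2) (Fin 2) R)).trace • 1 := by
  rw [coe_inv_mul_mul_coe_inv_fin_two B₁ B₂ hη, sub_neg_eq_add, add_adjugate_fin_two]

end SpecialLinearGroup

end Matrix

theorem trace_second_derivative_identity_general
    (A₁ A₂ B₁ B₂ : Matrix.SpecialLinearGroup (Fin 2) ℂ)
    (ξ η : Matrix (Fin 2) (Fin 2) ℂ) (hη : η.trace = 0) :
    ((B₂ : Matrix (Fin 2) (Fin 2) ℂ) * η * (B₁ : Matrix (Fin 2) (Fin 2) ℂ) *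
        (A₂ : Matrix (Fin 2) (Fin 2) ℂ) * ξ * (A₁ : Matrix (Fin 2) (Fin 2) ℂ)).trace -
      (((B₁⁻¹ : Matrix.SpecialLinearGroup (Fin 2) ℂ) : Matrix (Fin 2) (Fin 2) ℂ) * η *
        ((B₂⁻¹ : Matrix.SpecialLinearGroup (Fin 2) ℂ) : Matrix (Fin 2) (Fin 2) ℂ) *
        (A₂ : Matrix (Fin 2) (Fin 2) ℂ) * ξ * (A₁ : Matrix (Fin 2) (Fin 2) ℂ)).trace =
    ((A₂ : Matrix (Fin 2) (Fin 2) ℂ) * ξ * (A₁ : Matrix (Fin 2) (Fin 2) ℂ)).trace *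
      ((B₂ : Matrix (Fin 2) (Fin 2) ℂ) * η * (B₁ : Matrix (Fin 2) (Fin 2) ℂ)).trace := by
  simp only [Matrix.mul_assoc _ _ (↑A₁ : Matrix (Fin 2) (Fin 2) ℂ),
    Matrix.mul_assoc _ (↑A₂ : Matrix (Fin 2) (Fin 2) ℂ)]
  rw [← trace_sub, ← sub_mul,
    Matrix.SpecialLinearGroup.coe_mul_mul_coe_sub_coe_inv_mul_mul_coe_inv_fin_two B₁ B₂ hη,
    smul_mul_assoc, one_mul, trace_smul, smul_eq_mul, mul_comm]

/-- For `A₁, A₂, B₁, B₂ ∈ SL₂(ℂ)` and traceless `ξ, η ∈ sl₂(ℂ)`: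
`tr(B₂ η B₁ A₂ ξ A₁) − tr(B₁⁻¹ η B₂⁻¹ A₂ ξ A₁) = tr(A₂ ξ A₁)·tr(B₂ η B₁)`. -/
theorem trace_second_derivative_identity
    (A₁ A₂ B₁ B₂ : Matrix.SpecialLinearGroup (Fin 2) ℂ)
    (ξ η : Matrix (Fin 2) (Fin 2) ℂ) (hξ : ξ.trace = 0) (hη : η.trace = 0) :
    ((B₂ : Matrix (Fin 2) (Fin 2) ℂ) * η * (B₁ : Matrix (Fin 2) (Fin 2) ℂ) *
        (A₂ : Matrix (Fin 2) (Fin 2) ℂ) * ξ * (A₁ : Matrix (Fin 2) (Fin 2) ℂ)).trace -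
      (((B₁⁻¹ : Matrix.SpecialLinearGroup (Fin 2) ℂ) : Matrix (Fin 2) (Fin 2) ℂ) * η *
        ((B₂⁻¹ : Matrix.SpecialLinearGroup (Fin 2) ℂ) : Matrix (Fin 2) (Fin 2) ℂ) *
        (A₂ : Matrix (Fin 2) (Fin 2) ℂ) * ξ * (A₁ : Matrix (Fin 2) (Fin 2) ℂ)).trace =
    ((A₂ : Matrix (Fin 2) (Fin 2) ℂ) * ξ * (A₁ : Matrix (Fin 2) (Fin 2) ℂ)).trace *
      ((B₂ : Matrix (Fin 2) (Fin 2) ℂ) * η * (B₁ : Matrix (Fin 2) (Fin 2) ℂ)).trace :=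
  trace_second_derivative_identity_general A₁ A₂ B₁ B₂ ξ η hη
end

section
/- Let H = diag(1,−1), E = E₁₂, F = E₂₁ be the standard basis of sl₂(ℂ), and for a bilinear form φ on sl₂(ℂ) set Q(φ) = φ(H,H) + 2φ(E,F) + 2φ(F,E). Let A, B ∈ SL₂(ℂ) and define the bilinear form φ on sl₂(ℂ) by φ(ξ,η) = tr(B η A ξ). Then Q(φ) = tr(A)·tr(B) + tr(AB⁻¹). -/
/-- Standard basis `H = diag(1,−1)` of `sl₂(ℂ)`. -/
def Hmat : Matrix (Fin 2) (Fin 2) ℂ := !![1, 0; 0, -1]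
/-- Standard basis `E = E₁₂` of `sl₂(ℂ)`. -/
def Emat : Matrix (Fin 2) (Fin 2) ℂ := !![0, 1; 0, 0]
/-- Standard basis `F = E₂₁` of `sl₂(ℂ)`. -/
def Fmat : Matrix (Fin 2) (Fin 2) ℂ := !![0, 0; 1, 0]

/-!
With respect to the trace form, the dual basis of `H, E, F` is `H/2, F, E`, so `Q(φ)` is twice
the contraction of `φ` with the Casimir tensor of `sl₂`. That tensor is the flip of `ℂ² ⊗ ℂ²`
minus half the identity, which gives the sandwich identity `H X H + 2 F X E + 2 E X F = 2 tr(X) - X`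
and hence `Q(φ) = 2 tr(A) tr(B) - tr(AB)`. Cayley–Hamilton in the form `B⁻¹ = adj B = tr(B) - B`
turns this into the claimed expression.
-/

open Matrix

theorem Matrix.adjugate_fin_two_eq_trace_smul_sub {R : Type*} [CommRing R]
    (X : Matrix (Fin 2) (Fin 2) R) : adjugate X = X.trace • 1 - X := by
  ext i j
  fin_cases i <;> fin_cases j <;> simp [adjugate_fin_two, trace_fin_two]

theorem Matrix.trace_mul_adjugate_fin_two {R : Type*} [CommRing R]
    (X Y : Matrix (Fin 2) (Fin 2) R) :
    (X * adjugate Y).trace = X.trace * Y.trace - (X * Y).trace := by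
  rw [adjugate_fin_two_eq_trace_smul_sub, mul_sub, mul_smul_comm, mul_one, trace_sub,
    trace_smul, smul_eq_mul, mul_comm]

theorem sl2_casimir_sandwich (X : Matrix (Fin 2) (Fin 2) ℂ) :
    Hmat * X * Hmat + (2 : ℂ) • (Fmat * X * Emat) + (2 : ℂ) • (Emat * X * Fmat) =
      (2 * X.trace) • 1 - X := by
  rw [eta_fin_two X]
  ext i j
  fin_cases i <;> fin_cases j <;> simp [Hmat, Emat, Fmat] <;> ring

theorem trace_crossing_form (X Y : Matrix (Fin 2) (Fin 2) ℂ) :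
    (Y * Hmat * X * Hmat).trace + 2 * (Y * Fmat * X * Emat).trace +
        2 * (Y * Emat * X * Fmat).trace =
      2 * X.trace * Y.trace - (X * Y).trace :=
  calc _ = (Y * (Hmat * X * Hmat + (2 : ℂ) • (Fmat * X * Emat) +
          (2 : ℂ) • (Emat * X * Fmat))).trace := by
        simp only [mul_add, mul_smul_comm, trace_add, trace_smul, smul_eq_mul, Matrix.mul_assoc]
    _ = _ := by
        rw [sl2_casimir_sandwich, mul_sub, mul_smul_comm, mul_one, trace_sub, trace_smul,
          smul_eq_mul, trace_mul_comm Y]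

/-- For `A, B ∈ SL₂(ℂ)` and the bilinear form `φ(ξ,η) = tr(B η A ξ)` on `sl₂(ℂ)`, one has
`Q(φ) := φ(H,H) + 2φ(E,F) + 2φ(F,E) = tr(A)·tr(B) + tr(AB⁻¹)`. -/
theorem Q_of_crossing_form (A B : Matrix.SpecialLinearGroup (Fin 2) ℂ) :
    ((B : Matrix (Fin 2) (Fin 2) ℂ) * Hmat * (A : Matrix (Fin 2) (Fin 2) ℂ) * Hmat).trace +
      2 * ((B : Matrix (Fin 2) (Fin 2) ℂ) * Fmat * (A : Matrix (Fin 2) (Fin 2) ℂ) * Emat).trace +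
      2 * ((B : Matrix (Fin 2) (Fin 2) ℂ) * Emat * (A : Matrix (Fin 2) (Fin 2) ℂ) * Fmat).trace =
    (A : Matrix (Fin 2) (Fin 2) ℂ).trace * (B : Matrix (Fin 2) (Fin 2) ℂ).trace +
      ((A : Matrix (Fin 2) (Fin 2) ℂ) *
        ((B⁻¹ : Matrix.SpecialLinearGroup (Fin 2) ℂ) : Matrix (Fin 2) (Fin 2) ℂ)).trace := by
  rw [Matrix.SpecialLinearGroup.coe_inv, trace_mul_adjugate_fin_two, trace_crossing_form]
  ring
end

section
/- Let H = diag(1,−1), E = E₁₂, F = E₂₁ be the standard basis of sl₂(ℂ), and for a bilinear form φ on sl₂(ℂ) set Q(φ) = φ(H,H) + 2φ(E,F) + 2φ(F,E). Let A, B ∈ SL₂(ℂ) and define the bilinear form φ on sl₂(ℂ) by φ(ξ,η) = tr(Aξ)·tr(B⁻¹η). Then Q(φ) = tr(AB⁻¹) − tr(AB). -/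
namespace Matrix

theorem adjugate_fin_two_eq_trace_smul_one_sub {R : Type*} [CommRing R]
    (M : Matrix (Fin 2) (Fin 2) R) :
    M.adjugate = M.trace • (1 : Matrix (Fin 2) (Fin 2) R) - M := by
  ext i j
  fin_cases i <;> fin_cases j <;> simp [adjugate_fin_two, trace_fin_two]

theorem trace_mul_Hmat_add_trace_mul_Emat_add_trace_mul_Fmat (A C : Matrix (Fin 2) (Fin 2) ℂ) :
    (A * Hmat).trace * (C * Hmat).trace + 2 * (A * Emat).trace * (C * Fmat).trace +
        2 * (A * Fmat).trace * (C * Emat).trace =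
      2 * (A * C).trace - A.trace * C.trace := by
  simp only [Hmat, Emat, Fmat, trace_fin_two, Fin.isValue, mul_apply, of_apply, cons_val',
    cons_val_zero, cons_val_one, cons_val_fin_one, Fin.sum_univ_two, mul_one, mul_zero, add_zero,
    mul_neg, zero_add]
  ring

namespace SpecialLinearGroup

variable {R : Type*} [CommRing R]

open scoped MatrixGroups

theorem coe_inv_eq_trace_smul_one_sub (B : SL(2, R)) :
    ((B⁻¹ : SL(2, R)) : Matrix (Fin 2) (Fin 2) R) =
      (B : Matrix (Fin 2) (Fin 2) R).trace • 1 - B := by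
  rw [coe_inv, adjugate_fin_two_eq_trace_smul_one_sub]

theorem trace_coe_inv (B : SL(2, R)) :
    ((B⁻¹ : SL(2, R)) : Matrix (Fin 2) (Fin 2) R).trace =
      (B : Matrix (Fin 2) (Fin 2) R).trace := by
  rw [coe_inv_eq_trace_smul_one_sub, trace_sub, trace_smul, trace_one, Fintype.card_fin,
    smul_eq_mul]
  ring

theorem trace_mul_coe_inv_add_trace_mul (A : Matrix (Fin 2) (Fin 2) R) (B : SL(2, R)) :
    (A * ((B⁻¹ : SL(2, R)) : Matrix (Fin 2) (Fin 2) R)).trace + (A * B).trace =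
      A.trace * (B : Matrix (Fin 2) (Fin 2) R).trace := by
  rw [coe_inv_eq_trace_smul_one_sub, mul_sub, mul_smul_comm, mul_one, trace_sub, trace_smul,
    smul_eq_mul, sub_add_cancel, mul_comm]

end SpecialLinearGroup

end Matrix

/-- For `A, B ∈ SL₂(ℂ)` and the bilinear form `φ(ξ,η) = tr(Aξ)·tr(B⁻¹η)` on `sl₂(ℂ)`, one has
`Q(φ) := φ(H,H) + 2φ(E,F) + 2φ(F,E) = tr(AB⁻¹) − tr(AB)`. -/
theorem Q_of_disconnected_crossing_form (A B : Matrix.SpecialLinearGroup (Fin 2) ℂ) :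
    ((A : Matrix (Fin 2) (Fin 2) ℂ) * Hmat).trace *
        (((B⁻¹ : Matrix.SpecialLinearGroup (Fin 2) ℂ) : Matrix (Fin 2) (Fin 2) ℂ) * Hmat).trace +
      2 * ((A : Matrix (Fin 2) (Fin 2) ℂ) * Emat).trace *
        (((B⁻¹ : Matrix.SpecialLinearGroup (Fin 2) ℂ) : Matrix (Fin 2) (Fin 2) ℂ) * Fmat).trace +
      2 * ((A : Matrix (Fin 2) (Fin 2) ℂ) * Fmat).trace *
        (((B⁻¹ : Matrix.SpecialLinearGroup (Fin 2) ℂ) : Matrix (Fin 2) (Fin 2) ℂ) * Emat).trace =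
    ((A : Matrix (Fin 2) (Fin 2) ℂ) *
        ((B⁻¹ : Matrix.SpecialLinearGroup (Fin 2) ℂ) : Matrix (Fin 2) (Fin 2) ℂ)).trace -
      ((A : Matrix (Fin 2) (Fin 2) ℂ) * (B : Matrix (Fin 2) (Fin 2) ℂ)).trace := by
  rw [Matrix.trace_mul_Hmat_add_trace_mul_Emat_add_trace_mul_Fmat,
    Matrix.SpecialLinearGroup.trace_coe_inv,
    ← Matrix.SpecialLinearGroup.trace_mul_coe_inv_add_trace_mul]
  ring
end
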